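/- Let M be a [0,1]-module with a countable dual basis (e_i, φ_i)_{i∈I} such that e_i ≠ 0 and φ_i ≠ 0 for every i ∈ I. Define i ≈ j iff φ_j(e_i) ≠ 0; this is an equivalence relation on I. Let J ⊆ I contain exactly one representative of each ≈-class, and for i ∈ I let ρ(i) ∈ J denote the representative of the class of i. Then for every x ∈ M there exists a unique function r : J → [0,∞) such that φ_i(x) = r(ρ(i))·φ_i(e_{ρ(i)}) (as real numbers) for every i ∈ I. (This expresses each x ∈ M uniquely as a combination x = ∑_{j∈J} r(j)·e_j of the family (e_j)_{j∈J} with nonnegative real coefficients.) -/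

import Mathlib

/-- A Σ-monoid: a set with a partial countable sum, represented via `Option`. -/
structure SigmaMonoid (M : Type) where
  zero : M
  sum : (ℕ → M) → Option M
  sum_unit : ∀ (x : ℕ → M) (j : ℕ), (∀ i, i ≠ j → x i = zero) → sum x = some (x j)
  sum_perm : ∀ (I J : Set ℕ) (σ : ↥(Iᶜ) ≃ ↥(Jᶜ)) (x y : ℕ → M),
      (∀ i ∈ I, x i = zero) → (∀ j ∈ J, y j = zero) →
      (∀ i : ↥(Iᶜ), x i.1 = y (σ i).1) → sum x = sum y
  sum_assoc : ∀ (σ : ℕ × ℕ ≃ ℕ) (x s : ℕ → M),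
      (∀ j, sum (fun k => x (σ (j, k))) = some (s j)) → sum x = sum s
  sum_assoc_inner : ∀ (σ : ℕ × ℕ ≃ ℕ) (x : ℕ → M) (v : M),
      sum x = some v → ∀ j, ∃ w, sum (fun k => x (σ (j, k))) = some w

/-- The (partial) binary sum `x + y`, i.e. the sum of the family `(x, y, 0, 0, …)`. -/
def SigmaMonoid.add {M : Type} (S : SigmaMonoid M) (x y : M) : Option M :=
  S.sum (fun n => if n = 0 then x else if n = 1 then y else S.zero)

/-- A Σ-monoid homomorphism. -/
def SigmaHom {M N : Type} (S : SigmaMonoid M) (T : SigmaMonoid N) (f : M → N) : Prop :=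
  f S.zero = T.zero ∧
  ∀ (x : ℕ → M) (v : M), S.sum x = some v → T.sum (fun i => f (x i)) = some (f v)

/-- A Σ-semiring: a Σ-monoid with a total commutative multiplication distributing
over the partial sums. -/
structure SigmaSemiring (R : Type) extends SigmaMonoid R where
  one : R
  mul : R → R → R
  mul_assoc' : ∀ a b c, mul (mul a b) c = mul a (mul b c)
  mul_comm' : ∀ a b, mul a b = mul b a
  one_mul' : ∀ a, mul one a = a
  zero_mul' : ∀ a, mul zero a = zero
  mul_sum : ∀ (e : ℕ ≃ ℕ × ℕ) (r s : ℕ → R) (a b : R),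
      sum r = some a → sum s = some b →
      sum (fun n => mul (r (e n).1) (s (e n).2)) = some (mul a b)

/-- A module over a Σ-semiring. -/
structure SigmaModule (R : Type) (S : SigmaSemiring R) (M : Type) extends SigmaMonoid M where
  smul : R → M → M
  one_smul' : ∀ x, smul S.one x = x
  mul_smul' : ∀ r s x, smul (S.mul r s) x = smul r (smul s x)
  zero_smul' : ∀ x, smul S.zero x = zero
  smul_zero' : ∀ r, smul r zero = zero
  smul_sum : ∀ (e : ℕ ≃ ℕ × ℕ) (r : ℕ → R) (x : ℕ → M) (a : R) (b : M),
      S.sum r = some a → sum x = some b →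
      sum (fun n => smul (r (e n).1) (x (e n).2)) = some (smul a b)

/-- An `R`-linear map between `R`-modules. -/
def RLinear {R M N : Type} (S : SigmaSemiring R)
    (MM : SigmaModule R S M) (NN : SigmaModule R S N) (f : M → N) : Prop :=
  f MM.zero = NN.zero ∧
  (∀ (x : ℕ → M) (v : M), MM.sum x = some v → NN.sum (fun i => f (x i)) = some (f v)) ∧
  (∀ r x, f (MM.smul r x) = NN.smul r (f x))

/-- The unit interval `[0,1]`, as a subtype of the nonnegative reals. -/
def UnitI : Type := {r : NNReal // r ≤ 1}

def uZero : UnitI := ⟨0, zero_le_one⟩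

def uOne : UnitI := ⟨1, le_refl 1⟩

def uMul (a b : UnitI) : UnitI :=
  ⟨a.1 * b.1, by
    calc a.1 * b.1 ≤ 1 * 1 := mul_le_mul' a.2 b.2
    _ = 1 := one_mul 1⟩

open Classical in
/-- The partial sum on `[0,1]`: `Σ_i r_i` is defined iff the series converges
to a value `≤ 1`, in which case that value is the sum. -/
noncomputable def uSum (r : ℕ → UnitI) : Option UnitI :=
  if h : (∑' i, ((r i).1 : ENNReal)) ≤ 1 then
    some ⟨(∑' i, ((r i).1 : ENNReal)).toNNReal, by
      have hne : (∑' i, ((r i).1 : ENNReal)) ≠ ⊤ :=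
        ne_top_of_le_ne_top ENNReal.one_ne_top h
      exact ENNReal.coe_le_coe.mp
        (by rw [ENNReal.coe_toNNReal hne]; exact_mod_cast h)⟩
  else none

open Classical in
/-- `sumIdx S f v` says that the sum of the countable family `f`, taken along
an enumeration of its index set padded with zeros (which is independent of the
enumeration by the permutation axiom), is defined and equals `v`. -/
def sumIdx {M : Type} (S : SigmaMonoid M) {ι : Type} (f : ι → M) (v : M) : Prop :=
  ∃ e : ι ↪ ℕ,
    S.sum (fun n => if h : ∃ i, e i = n then f h.choose else S.zero) = some v

/-- A `[0,1]`-linear map from a `[0,1]`-module to `[0,1]` itself. -/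
def UnitLinearMap (U : SigmaSemiring UnitI) {M : Type}
    (MM : SigmaModule UnitI U M) (φ : M → UnitI) : Prop :=
  φ MM.zero = U.zero ∧
  (∀ (x : ℕ → M) (v : M), MM.sum x = some v →
    U.sum (fun i => φ (x i)) = some (φ v)) ∧
  (∀ (r : UnitI) (x : M), φ (MM.smul r x) = U.mul r (φ x))

/-- A countable dual basis `(e_i, φ_i)_{i ∈ ι}` of a `[0,1]`-module:
each `φ_i` is `[0,1]`-linear and `x = Σ_{i∈ι} φ_i(x)·e_i` for every `x`. -/
def IsDualBasis (U : SigmaSemiring UnitI) {M ι : Type}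
    (MM : SigmaModule UnitI U M) (e : ι → M) (φ : ι → M → UnitI) : Prop :=
  (∀ i, UnitLinearMap U MM (φ i)) ∧
  ∀ x : M, sumIdx MM.toSigmaMonoid (fun i => MM.smul (φ i x) (e i)) x

/-! Write `a k i = φ_k(e_i)` and `f i = φ_i(x)`. Applying the linear map `φ_k` to
`x = Σ_i φ_i(x)·e_i` gives `Σ_l a k l * f l = f k`; with `x = e_m` it shows that `a` is an
idempotent kernel. For a pivot `j` (`a j j ≠ 0`) let `S` be the support of row `j`. Then
`K m l = a j l * a l m / a j m` is a stochastic kernel on `S` with `K m j = a j j` for all `m`,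
so every bounded `K`-harmonic function on `S` is constant (Doeblin's sup/inf argument).
Applied to `m ↦ a k m / a j m`, this makes the columns of `a` proportional on `S`, whence
`a j j * f i = a i j * f j` whenever `a j i ≠ 0`. Taking `j = ρ i` yields the coefficients
`r j = f j / a j j`. -/

open scoped ENNReal

namespace ENNReal

theorem le_of_le_mul_add_tsub_mul {c x y : ℝ≥0∞} (hc0 : c ≠ 0) (hc1 : c ≤ 1) (hy : y ≠ ∞)
    (h : y ≤ c * x + (1 - c) * y) : y ≤ x := by
  have hsplit : c * y + (1 - c) * y = y := by rw [← add_mul, add_tsub_cancel_of_le hc1, one_mul]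
  rw [← ENNReal.mul_le_mul_iff_right hc0 (ne_top_of_le_ne_top one_ne_top hc1),
    ← ENNReal.add_le_add_iff_right (mul_ne_top (sub_ne_top one_ne_top) hy)]
  exact hsplit.le.trans h

theorem le_of_mul_add_tsub_mul_le {c x y : ℝ≥0∞} (hc0 : c ≠ 0) (hc1 : c ≤ 1) (hy : y ≠ ∞)
    (h : c * x + (1 - c) * y ≤ y) : x ≤ y := by
  have hsplit : c * y + (1 - c) * y = y := by rw [← add_mul, add_tsub_cancel_of_le hc1, one_mul]
  rw [← ENNReal.mul_le_mul_iff_right hc0 (ne_top_of_le_ne_top one_ne_top hc1),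
    ← ENNReal.add_le_add_iff_right (mul_ne_top (sub_ne_top one_ne_top) hy)]
  exact h.trans hsplit.ge

end ENNReal

theorem harmonic_apply_eq_of_const_column {σ : Type*} {K : σ → σ → ℝ≥0∞} {j : σ}
    {c B : ℝ≥0∞} {h : σ → ℝ≥0∞} (hK : ∀ m, ∑' l, K m l = 1) (hKj : ∀ m, K m j = c)
    (hc : c ≠ 0) (hh : ∀ m, ∑' l, K m l * h l = h m) (hB : ∀ m, h m ≤ B) (hB' : B ≠ ∞)
    (m : σ) : h m = h j := by
  classical
  have hc1 : c ≤ 1 := hKj j ▸ hK j ▸ ENNReal.le_tsum j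
  have hoff : ∀ m, ∑' l, (if l = j then 0 else K m l) = 1 - c := fun m =>
    ENNReal.eq_sub_of_add_eq (ne_top_of_le_ne_top ENNReal.one_ne_top hc1) <| by
      rw [add_comm, ← hKj m, ← ENNReal.tsum_eq_add_tsum_ite j, hK m]
  have hsplit : ∀ m, h m = c * h j + ∑' l, if l = j then 0 else K m l * h l := fun m => by
    rw [← hh m, ENNReal.tsum_eq_add_tsum_ite j, hKj]
  have upper : ∀ s, (∀ l, h l ≤ s) → ∀ m, h m ≤ c * h j + (1 - c) * s := by
    intro s hs m
    rw [hsplit m, ← hoff m, ← ENNReal.tsum_mul_right]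
    gcongr with l
    split_ifs
    · simp
    · gcongr; exact hs l
  have lower : ∀ t, (∀ l, t ≤ h l) → ∀ m, c * h j + (1 - c) * t ≤ h m := by
    intro t ht m
    rw [hsplit m, ← hoff m, ← ENNReal.tsum_mul_right]
    gcongr with l
    split_ifs
    · simp
    · gcongr; exact ht l
  have hs : ⨆ l, h l ≤ h j := ENNReal.le_of_le_mul_add_tsub_mul hc hc1
    (ne_top_of_le_ne_top hB' (iSup_le hB)) (iSup_le (upper _ (le_iSup h)))
  have ht : h j ≤ ⨅ l, h l := ENNReal.le_of_mul_add_tsub_mul_le hc hc1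
    (ne_top_of_le_ne_top hB' ((iInf_le h j).trans (hB j))) (le_iInf (lower _ (iInf_le h)))
  exact le_antisymm ((le_iSup h m).trans hs) (ht.trans (iInf_le h m))

def IsIdempotentKernel {ι : Type*} (a : ι → ι → ℝ≥0∞) : Prop :=
  ∀ k m, ∑' l, a k l * a l m = a k m

namespace IsIdempotentKernel

variable {ι : Type*} {a : ι → ι → ℝ≥0∞}

theorem apply_eq_zero (ha : IsIdempotentKernel a) {j i m : ι} (hji : a j i ≠ 0)
    (hjm : a j m = 0) : a i m = 0 := by
  have hsum : ∑' l, a j l * a l m = 0 := by rw [ha, hjm]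
  exact (mul_eq_zero.mp (ENNReal.tsum_eq_zero.mp hsum i)).resolve_left hji

theorem mul_apply_eq_mul_apply (ha : IsIdempotentKernel a) (hfin : ∀ k m, a k m ≠ ∞)
    {j k m : ι} (hjj : a j j ≠ 0) (hjk : a j k ≠ 0) (hjm : a j m ≠ 0) :
    a j j * a k m = a k j * a j m := by
  set S : Set ι := {l | a j l ≠ 0}
  have tsum_subtype_S : ∀ g : ι → ℝ≥0∞, (∀ l, g l ≠ 0 → a j l ≠ 0) → ∑' l : S, g l = ∑' l, g l :=
    fun g hg => tsum_subtype_eq_of_support_subset hg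
  let K : S → S → ℝ≥0∞ := fun m l => a j l * a l m / a j m
  let h : S → ℝ≥0∞ := fun m => a k m / a j m
  have hK : ∀ n : S, ∑' l, K n l = 1 := fun n => by
    simp only [K, div_eq_mul_inv, ENNReal.tsum_mul_right]
    rw [tsum_subtype_S (fun l => a j l * a l n) fun l => left_ne_zero_of_mul, ha,
      ENNReal.mul_inv_cancel n.2 (hfin j n)]
  have hKj : ∀ m : S, K m ⟨j, hjj⟩ = a j j := fun m => ENNReal.mul_div_cancel_right m.2 (hfin j m)
  have hh : ∀ m : S, ∑' l, K m l * h l = h m := fun m => by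
    have hterm : ∀ l : S, K m l * h l = a k l * a l m * (a j m)⁻¹ := fun l => by
      simp only [K, h, div_eq_mul_inv]
      calc a j l * a l m * (a j m)⁻¹ * (a k l * (a j l)⁻¹)
          = a k l * a l m * (a j m)⁻¹ * (a j l * (a j l)⁻¹) := by ring
        _ = a k l * a l m * (a j m)⁻¹ := by rw [ENNReal.mul_inv_cancel l.2 (hfin j l), mul_one]
    rw [tsum_congr hterm, ENNReal.tsum_mul_right, tsum_subtype_S (fun l => a k l * a l m) fun l hl =>
      fun hjl => left_ne_zero_of_mul hl (ha.apply_eq_zero hjk hjl), ha, ← div_eq_mul_inv]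
  have hB : ∀ m : S, h m ≤ (a j k)⁻¹ := fun m => by
    rw [ENNReal.le_inv_iff_mul_le, mul_comm, ← mul_div_assoc, ← hK m]
    exact ENNReal.le_tsum (f := K m) ⟨k, hjk⟩
  have hmj := harmonic_apply_eq_of_const_column hK hKj hjj hh hB (ENNReal.inv_ne_top.mpr hjk)
    ⟨m, hjm⟩
  rw [mul_comm (a k j)]
  exact (ENNReal.div_eq_div_iff hjj (hfin j j) hjm (hfin j m)).mp hmj

theorem mul_eq_mul_of_fixed (ha : IsIdempotentKernel a) (hfin : ∀ k m, a k m ≠ ∞)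
    {f : ι → ℝ≥0∞} (hf : ∀ k, ∑' l, a k l * f l = f k) {j i : ι} (hjj : a j j ≠ 0)
    (hji : a j i ≠ 0) : a j j * f i = a i j * f j := by
  rw [← hf i, ← hf j, ← ENNReal.tsum_mul_left, ← ENNReal.tsum_mul_left]
  refine tsum_congr fun m => ?_
  by_cases hjm : a j m = 0
  · simp [hjm, ha.apply_eq_zero hji hjm]
  · rw [← mul_assoc, ← mul_assoc, ha.mul_apply_eq_mul_apply hfin hjj hji hjm]

end IsIdempotentKernel

theorem tsum_coe_eq_of_uSum_eq_some {r : ℕ → UnitI} {v : UnitI} (h : uSum r = some v) :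
    ∑' n, ((r n).1 : ℝ≥0∞) = v.1 := by
  unfold uSum at h
  split_ifs at h with hle
  rw [← Option.some_inj.mp h, ENNReal.coe_toNNReal (ne_top_of_le_ne_top ENNReal.one_ne_top hle)]

theorem UnitLinearMap.tsum_eq_of_sumIdx {U : SigmaSemiring UnitI} (hUzero : U.zero = uZero)
    (hUsum : U.sum = uSum) {M ι : Type} {MM : SigmaModule UnitI U M} {φ : M → UnitI}
    (hφ : UnitLinearMap U MM φ) {f : ι → M} {v : M} (hf : sumIdx MM.toSigmaMonoid f v) :
    ∑' i, ((φ (f i)).1 : ℝ≥0∞) = (φ v).1 := by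
  classical
  obtain ⟨emb, hsum⟩ := hf
  have hφsum := hφ.2.1 _ _ hsum
  rw [hUsum] at hφsum
  rw [← tsum_coe_eq_of_uSum_eq_some hφsum, ← emb.injective.tsum_eq]
  · refine tsum_congr fun i => ?_
    have hex : ∃ i', emb i' = emb i := ⟨i, rfl⟩
    rw [dif_pos hex, emb.injective hex.choose_spec]
  · intro n hn
    by_contra hr
    rw [Function.mem_support, dif_neg fun ⟨i, hi⟩ => hr ⟨i, hi⟩, hφ.1, hUzero] at hn
    exact hn rfl

theorem IsDualBasis.tsum_mul_eq {U : SigmaSemiring UnitI} (hUzero : U.zero = uZero)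
    (hUsum : U.sum = uSum) (hUmul : U.mul = uMul) {M ι : Type} {MM : SigmaModule UnitI U M}
    {e : ι → M} {φ : ι → M → UnitI} (hb : IsDualBasis U MM e φ) (k : ι) (x : M) :
    ∑' i, ((φ k (e i)).1 : ℝ≥0∞) * (φ i x).1 = (φ k x).1 := by
  rw [← (hb.1 k).tsum_eq_of_sumIdx hUzero hUsum (hb.2 x)]
  refine tsum_congr fun i => ?_
  rw [(hb.1 k).2.2, hUmul, mul_comm]
  simp [uMul]

theorem existsUnique_forall_eq_mul_of_mul_eq_mul {ι : Type*} {J : Set ι} {ρ : ι → ι}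
    (hρJ : ∀ i, ρ i ∈ J) (hρfix : ∀ j ∈ J, ρ j = j) {a : ι → ι → NNReal} {f : ι → NNReal}
    (hpiv : ∀ i, a (ρ i) (ρ i) ≠ 0) (hkey : ∀ i, a (ρ i) (ρ i) * f i = a i (ρ i) * f (ρ i)) :
    ∃! r : J → NNReal, ∀ i, f i = r ⟨ρ i, hρJ i⟩ * a i (ρ i) := by
  refine ⟨fun j => f j / a j j, fun i => ?_, fun r hr => funext fun ⟨j, hj⟩ => ?_⟩
  · rw [div_mul_eq_mul_div, eq_div_iff (hpiv i), mul_comm, hkey i, mul_comm]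
  · have hsub : (⟨ρ j, hρJ j⟩ : J) = ⟨j, hj⟩ := Subtype.ext (hρfix j hj)
    have hrj := hr j
    have hjj := hpiv j
    rw [hsub, hρfix j hj] at hrj
    rw [hρfix j hj] at hjj
    rw [hrj, mul_div_cancel_right₀ _ hjj]

theorem stmt17_general (U : SigmaSemiring UnitI)
    (hUzero : U.zero = uZero)
    (hUsum : U.sum = uSum) (hUmul : U.mul = uMul)
    {M ι : Type}
    (MM : SigmaModule UnitI U M)
    (e : ι → M) (φ : ι → M → UnitI)
    (hbasis : IsDualBasis U MM e φ)
    (J : Set ι) (ρ : ι → ι)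
    (hρ : ∀ i, ρ i ∈ J ∧ φ (ρ i) (e i) ≠ U.zero)
    (hone : ∀ j ∈ J, ∀ j' ∈ J, φ j' (e j) ≠ U.zero → j = j')
    (x : M) :
    ∃! r : {j : ι // j ∈ J} → NNReal,
      ∀ i : ι, (φ i x).1 = r ⟨ρ i, (hρ i).1⟩ * (φ i (e (ρ i))).1 := by
  have hidem : IsIdempotentKernel fun k i => ((φ k (e i)).1 : ℝ≥0∞) :=
    fun k m => hbasis.tsum_mul_eq hUzero hUsum hUmul k (e m)
  have hfixed := hbasis.tsum_mul_eq hUzero hUsum hUmul (x := x)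
  have hρfix : ∀ j ∈ J, ρ j = j := fun j hj => (hone j hj (ρ j) (hρ j).1 (hρ j).2).symm
  have hpiv : ∀ i, φ (ρ i) (e (ρ i)) ≠ U.zero := fun i => by
    simpa only [hρfix _ (hρ i).1] using (hρ (ρ i)).2
  have hval : ∀ {u : UnitI}, u ≠ U.zero → u.1 ≠ 0 := fun hu h => hu (hUzero ▸ Subtype.ext h)
  refine existsUnique_forall_eq_mul_of_mul_eq_mul (a := fun k i => (φ k (e i)).1)
    (f := fun i => (φ i x).1) (fun i => (hρ i).1) hρfix (fun i => hval (hpiv i)) fun i => ?_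
  exact_mod_cast hidem.mul_eq_mul_of_fixed (fun _ _ => ENNReal.coe_ne_top) hfixed
    (ENNReal.coe_ne_zero.mpr (hval (hpiv i))) (ENNReal.coe_ne_zero.mpr (hval (hρ i).2))

/-- In a `[0,1]`-module with a countable dual basis (with nonzero basis vectors
and nonzero coordinate functionals), fixing a set `J` of representatives of the
equivalence relation `i ≈ j iff φ_j(e_i) ≠ 0` (with `ρ i` the representative of
the class of `i`), every element `x` has a unique family of nonnegative real
coefficients `r : J → [0,∞)` with `φ_i(x) = r(ρ i)·φ_i(e_{ρ i})` for all `i`. -/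
theorem stmt17 (U : SigmaSemiring UnitI)
    (hUzero : U.zero = uZero) (hUone : U.one = uOne)
    (hUsum : U.sum = uSum) (hUmul : U.mul = uMul)
    {M ι : Type} [Countable ι]
    (MM : SigmaModule UnitI U M)
    (e : ι → M) (φ : ι → M → UnitI)
    (hbasis : IsDualBasis U MM e φ)
    (he0 : ∀ i, e i ≠ MM.zero)
    (hφ0 : ∀ i, φ i ≠ fun _ => U.zero)
    (J : Set ι) (ρ : ι → ι)
    (hρ : ∀ i, ρ i ∈ J ∧ φ (ρ i) (e i) ≠ U.zero)
    (hone : ∀ j ∈ J, ∀ j' ∈ J, φ j' (e j) ≠ U.zero → j = j')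
    (x : M) :
    ∃! r : {j : ι // j ∈ J} → NNReal,
      ∀ i : ι, (φ i x).1 = r ⟨ρ i, (hρ i).1⟩ * (φ i (e (ρ i))).1 :=
  stmt17_general U hUzero hUsum hUmul MM e φ hbasis J ρ hρ hone x
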